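/- arXiv:2109.05389 — 2 statements merged into one kernel-verified Lean document; each statement's English description precedes it below -/
import Mathlib

section
/- Let ℓ : ℝ → ℝ be convex and let I = [c,d] be a closed interval such that inf_{t ∈ I} ℓ(t) ≤ inf_{t ∈ ℝ} ℓ(t) + ε. Then for every t ∈ ℝ, ℓ(clip(t, I)) ≤ ℓ(t) + ε. -/
/-!
The clipped point `clip(t)` lies between `t` and every `s ∈ [c,d]`, so convexity gives
`ℓ(clip t) ≤ max (ℓ s) (ℓ t)` for all such `s`, hence
`ℓ(clip t) ≤ max (inf_{[c,d]} ℓ) (ℓ t) ≤ ℓ t + ε`.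
-/

open Set

lemma le_max_csInf_image_of_forall_le_max {α β : Type*} [ConditionallyCompleteLinearOrder β]
    {f : α → β} {S : Set α} {x y : β} (hS : S.Nonempty) (h : ∀ s ∈ S, x ≤ max (f s) y) :
    x ≤ max (sInf (f '' S)) y := by
  by_cases hxy : x ≤ y
  · exact le_max_of_le_right hxy
  · refine le_max_of_le_left (le_csInf (hS.image f) (forall_mem_image.2 fun s hs => ?_))
    exact (le_max_iff.1 (h s hs)).resolve_right hxy

lemma max_min_mem_uIcc {α : Type*} [LinearOrder α] {c d s : α} (hs : s ∈ Icc c d) (t : α) :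
    max c (min t d) ∈ uIcc s t := by
  obtain ⟨hcs, hsd⟩ := hs
  rw [mem_uIcc]
  grind

/-- If `ℓ` is convex and the interval `[c,d]` contains an `ε`-approximate minimizer of `ℓ`
(`inf_{t ∈ [c,d]} ℓ(t) ≤ inf_{t ∈ ℝ} ℓ(t) + ε`), then `ℓ(clip(t,[c,d])) ≤ ℓ(t) + ε` for all `t`. -/
theorem clip_loss_le (ℓ : ℝ → ℝ) (hconv : ConvexOn ℝ Set.univ ℓ)
    (c d ε : ℝ) (hcd : c ≤ d) (hε : 0 ≤ ε)
    (hopt : ∀ s : ℝ, sInf (ℓ '' Set.Icc c d) ≤ ℓ s + ε) :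
    ∀ t : ℝ, ℓ (max c (min t d)) ≤ ℓ t + ε := by
  intro t
  have hclip : ℓ (max c (min t d)) ≤ max (sInf (ℓ '' Icc c d)) (ℓ t) :=
    le_max_csInf_image_of_forall_le_max (nonempty_Icc.2 hcd) fun s hs =>
      hconv.le_on_segment (mem_univ s) (mem_univ t)
        (segment_eq_uIcc s t ▸ max_min_mem_uIcc hs t)
  exact hclip.trans (max_le (hopt t) (by linarith))
end

section
/- Suppose a partition S of X is α-approximately multicalibrated for a function class C under D (Σ_i D(S_i)·|Cov_{D_i}[c(x),y]| ≤ α for all c ∈ C) and that the indicator of a subset X' ⊆ X lies in C with D(X') > 0. Let p_i = E_{D_i}[y] and p'_i = E[y | x ∈ S_i ∩ X']. Then Σ_i D(S_i ∩ X')·|p_i − p'_i| ≤ α. -/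
/-!
For the indicator `c` of `X'` one has `E_{D_i}[c] = D(S_i ∩ X') / D(S_i)` and
`E_{D_i}[c y] = D(S_i ∩ X') p'_i / D(S_i)`, hence
`D(S_i) · Cov_{D_i}[c, y] = D(S_i ∩ X') (p'_i - p_i)`. The sum to be bounded is therefore,
term by term, the multicalibration sum for `c ∈ C`.
-/

open Finset

variable {X : Type*} [Fintype X] [DecidableEq X] {m : ℕ}

/-- Probability mass `D(S_i)` of state `i` of the partition given by `σ`. -/
noncomputable def smass (D : X → Bool → ℝ) (σ : X → Fin m) (i : Fin m) : ℝ :=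
  ∑ x, ∑ b, if σ x = i then D x b else 0

/-- Conditional expectation `E_{D_i}[F(x,y)]` on state `i`. -/
noncomputable def sexp (D : X → Bool → ℝ) (σ : X → Fin m) (i : Fin m)
    (F : X → Bool → ℝ) : ℝ :=
  (∑ x, ∑ b, if σ x = i then D x b * F x b else 0) / smass D σ i

/-- Conditional covariance `Cov_{D_i}[c(x), y]` on state `i`. -/
noncomputable def scov (D : X → Bool → ℝ) (σ : X → Fin m) (i : Fin m) (c : X → ℝ) : ℝ :=
  sexp D σ i (fun x b => c x * (if b then 1 else 0))
    - sexp D σ i (fun x _ => c x) * sexp D σ i (fun _ b => if b then 1 else 0)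

/-- `p_i = E_{D_i}[y]`. -/
noncomputable def pstate (D : X → Bool → ℝ) (σ : X → Fin m) (i : Fin m) : ℝ :=
  sexp D σ i (fun _ b => if b then 1 else 0)

/-- Mass of `S_i ∩ X'`. -/
noncomputable def massInt (D : X → Bool → ℝ) (σ : X → Fin m) (X' : Finset X)
    (i : Fin m) : ℝ :=
  ∑ x, ∑ b, if σ x = i ∧ x ∈ X' then D x b else 0

/-- `p'_i = E[y | x ∈ S_i ∩ X']`. -/
noncomputable def pstateInt (D : X → Bool → ℝ) (σ : X → Fin m) (X' : Finset X)
    (i : Fin m) : ℝ :=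
  (∑ x, if σ x = i ∧ x ∈ X' then D x true else 0) / massInt D σ X' i

/-- `D(S_i ∩ X' ∩ {y = 1})`, the numerator of `pstateInt`. -/
noncomputable def massIntTrue (D : X → Bool → ℝ) (σ : X → Fin m) (X' : Finset X)
    (i : Fin m) : ℝ :=
  ∑ x, if σ x = i ∧ x ∈ X' then D x true else 0

section StateStatistics

variable {D : X → Bool → ℝ} (σ : X → Fin m) (X' : Finset X) (i : Fin m)

theorem massInt_nonneg (hD : ∀ x b, 0 ≤ D x b) : 0 ≤ massInt D σ X' i :=
  sum_nonneg fun x _ => sum_nonneg fun b _ => ite_nonneg (hD x b) le_rfl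

theorem massInt_le_smass (hD : ∀ x b, 0 ≤ D x b) : massInt D σ X' i ≤ smass D σ i :=
  sum_le_sum fun x _ => sum_le_sum fun b _ => by
    by_cases hx : σ x = i <;> by_cases hx' : x ∈ X' <;> simp [hx, hx', hD x b]

theorem massIntTrue_nonneg (hD : ∀ x b, 0 ≤ D x b) : 0 ≤ massIntTrue D σ X' i :=
  sum_nonneg fun x _ => ite_nonneg (hD x true) le_rfl

theorem massIntTrue_le_massInt (hD : ∀ x b, 0 ≤ D x b) :
    massIntTrue D σ X' i ≤ massInt D σ X' i :=
  sum_le_sum fun x _ => by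
    rw [Fintype.sum_bool]
    split_ifs <;> linarith [hD x false]

theorem massInt_eq_zero_of_smass_eq_zero (hD : ∀ x b, 0 ≤ D x b) (h : smass D σ i = 0) :
    massInt D σ X' i = 0 :=
  le_antisymm (h ▸ massInt_le_smass σ X' i hD) (massInt_nonneg σ X' i hD)

theorem massIntTrue_eq_zero_of_massInt_eq_zero (hD : ∀ x b, 0 ≤ D x b)
    (h : massInt D σ X' i = 0) : massIntTrue D σ X' i = 0 :=
  le_antisymm (h ▸ massIntTrue_le_massInt σ X' i hD) (massIntTrue_nonneg σ X' i hD)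

theorem massInt_mul_pstateInt (hD : ∀ x b, 0 ≤ D x b) :
    massInt D σ X' i * pstateInt D σ X' i = massIntTrue D σ X' i := by
  rcases eq_or_ne (massInt D σ X' i) 0 with h | h
  · rw [h, zero_mul, massIntTrue_eq_zero_of_massInt_eq_zero σ X' i hD h]
  · exact mul_div_cancel₀ _ h

theorem sexp_indicator :
    sexp D σ i (fun x _ => if x ∈ X' then 1 else 0) = massInt D σ X' i / smass D σ i := by
  simp [sexp, massInt, ite_and]

theorem sexp_indicator_mul_label :
    sexp D σ i (fun x b => (if x ∈ X' then 1 else 0) * (if b then 1 else 0))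
      = massIntTrue D σ X' i / smass D σ i := by
  simp [sexp, massIntTrue, ite_and]

theorem scov_indicator :
    scov D σ i (fun x => if x ∈ X' then 1 else 0)
      = massIntTrue D σ X' i / smass D σ i
        - massInt D σ X' i / smass D σ i * pstate D σ i := by
  rw [scov, sexp_indicator_mul_label, sexp_indicator, pstate]

theorem smass_mul_scov_indicator (hD : ∀ x b, 0 ≤ D x b) :
    smass D σ i * scov D σ i (fun x => if x ∈ X' then 1 else 0)
      = massInt D σ X' i * (pstateInt D σ X' i - pstate D σ i) := by
  rw [scov_indicator, mul_sub, mul_sub, massInt_mul_pstateInt σ X' i hD]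
  rcases eq_or_ne (smass D σ i) 0 with h | h
  · have hN := massInt_eq_zero_of_smass_eq_zero σ X' i hD h
    simp [h, hN, massIntTrue_eq_zero_of_massInt_eq_zero σ X' i hD hN]
  · field_simp

end StateStatistics

theorem multicalibration_subset_means_general {X : Type*} [Fintype X] [DecidableEq X] {m : ℕ}
    (D : X → Bool → ℝ) (hD : ∀ x b, 0 ≤ D x b)
    (σ : X → Fin m) (C : Set (X → ℝ)) (α : ℝ) (X' : Finset X)
    (hmc : ∀ c ∈ C, ∑ i, smass D σ i * |scov D σ i c| ≤ α)
    (hind : (fun x => if x ∈ X' then (1:ℝ) else 0) ∈ C) :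
    ∑ i, massInt D σ X' i * |pstate D σ i - pstateInt D σ X' i| ≤ α := by
  calc ∑ i, massInt D σ X' i * |pstate D σ i - pstateInt D σ X' i|
      = ∑ i, smass D σ i * |scov D σ i (fun x => if x ∈ X' then 1 else 0)| := by
        refine sum_congr rfl fun i _ => ?_
        have hsmass := (massInt_nonneg σ X' i hD).trans (massInt_le_smass σ X' i hD)
        rw [← abs_of_nonneg hsmass, ← abs_mul, smass_mul_scov_indicator σ X' i hD, abs_mul,
          abs_of_nonneg (massInt_nonneg σ X' i hD), abs_sub_comm]
    _ ≤ α := hmc _ hind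

/-- If a partition is `α`-approximately multicalibrated for a class `C` containing the
indicator of a subset `X'` with `D(X') > 0`, then `Σ_i D(S_i ∩ X')·|p_i − p'_i| ≤ α`. -/
theorem multicalibration_subset_means {X : Type*} [Fintype X] [DecidableEq X] {m : ℕ}
    (D : X → Bool → ℝ) (hD : ∀ x b, 0 ≤ D x b) (hD1 : ∑ x, ∑ b, D x b = 1)
    (σ : X → Fin m) (C : Set (X → ℝ)) (α : ℝ) (X' : Finset X)
    (hmc : ∀ c ∈ C, ∑ i, smass D σ i * |scov D σ i c| ≤ α)
    (hind : (fun x => if x ∈ X' then (1:ℝ) else 0) ∈ C)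
    (hpos : 0 < ∑ x ∈ X', ∑ b, D x b) :
    ∑ i, massInt D σ X' i * |pstate D σ i - pstateInt D σ X' i| ≤ α :=
  multicalibration_subset_means_general D hD σ C α X' hmc hind
end
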